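/- arXiv:1001.3175 — 2 statements merged into one kernel-verified Lean document; each statement's English description precedes it below -/
import Mathlib

section
/- If P is an Eulerian graded poset with 0̂, then the dual suspension Σ*(P) is Eulerian. Moreover, if P is a binomial poset with factorial function B, then Σ*(P) is a Sheffer poset with Sheffer factorial function D(n) = 2·B(n−1) for n ≥ 2. -/
open scoped Classical

/-! ## Basic notions: saturated chains, rank functions, Euler–Poincaré, Eulerian,
binomial / Sheffer / triangular posets. -/

/-- A saturated (maximal) chain from `x` to `y` in a poset, encoded as a list. -/
def IsSatChain {α : Type*} [PartialOrder α] (x y : α) (l : List α) : Prop :=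
  l.Chain' (· ⋖ ·) ∧ l.head? = some x ∧ l.getLast? = some y

/-- The number of maximal chains of the interval `[x, y]`. -/
noncomputable def chainCount {α : Type*} [PartialOrder α] (x y : α) : ℕ :=
  Nat.card {l : List α // IsSatChain x y l}

/-- `rk` is a rank function for a graded poset with `⊥`:
the bottom has rank `0` and ranks increase by one across cover relations. -/
def IsRankFunction {α : Type*} [PartialOrder α] [OrderBot α] (rk : α → ℕ) : Prop :=
  rk ⊥ = 0 ∧ ∀ x y : α, x ⋖ y → rk y = rk x + 1

/-- The interval `[x, y]` satisfies the Euler–Poincaré relation: it has as many elements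
of even rank as of odd rank. -/
def EulerPoincare {α : Type*} [Fintype α] [PartialOrder α] (rk : α → ℕ) (x y : α) : Prop :=
  (Finset.univ.filter fun z => x ≤ z ∧ z ≤ y ∧ Even (rk z)).card =
    (Finset.univ.filter fun z => x ≤ z ∧ z ≤ y ∧ ¬ Even (rk z)).card

/-- A graded poset is Eulerian if every non-singleton interval satisfies
the Euler–Poincaré relation. -/
def IsEulerian {α : Type*} [Fintype α] [PartialOrder α] (rk : α → ℕ) : Prop :=
  ∀ x y : α, x < y → EulerPoincare rk x y

/-- A binomial poset: the number of maximal chains of an interval depends only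
on its length, via the factorial function `B`. -/
def IsBinomial {α : Type*} [PartialOrder α] (rk : α → ℕ) (B : ℕ → ℕ) : Prop :=
  ∀ x y : α, x ≤ y → chainCount x y = B (rk y - rk x)

/-- A Sheffer poset: Sheffer intervals `[⊥, y]` have `D (ρ y)` maximal chains and binomial
intervals `[x, y]` with `x ≠ ⊥` have `B (ρ y - ρ x)` maximal chains. -/
def IsSheffer {α : Type*} [PartialOrder α] [OrderBot α] (rk : α → ℕ) (B D : ℕ → ℕ) : Prop :=
  (∀ y : α, chainCount ⊥ y = D (rk y)) ∧
    (∀ x y : α, x ≠ ⊥ → x ≤ y → chainCount x y = B (rk y - rk x))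

/-- A triangular poset: the number of maximal chains of `[x, y]` depends only on
`ρ x` and `ρ y`. -/
def IsTriangular {α : Type*} [PartialOrder α] (rk : α → ℕ) (B : ℕ → ℕ → ℕ) : Prop :=
  ∀ x y : α, x ≤ y → chainCount x y = B (rk x) (rk y)

/-! ## Constructions: summations, dual suspension, butterfly posets, polygon face lattices. -/

/-- The proper part of a bounded poset. -/
abbrev ProperPart (Q : Type*) [PartialOrder Q] [OrderBot Q] [OrderTop Q] : Type _ :=
  {x : Q // x ≠ ⊥ ∧ x ≠ ⊤}

/-- The summation `⊞_{i} Q i` of a family of bounded posets: identify all the minimal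
elements and all the maximal elements of the disjoint union of the `Q i`. -/
abbrev FamSum {ι : Type*} (Q : ι → Type*) [∀ i, PartialOrder (Q i)] [∀ i, OrderBot (Q i)]
    [∀ i, OrderTop (Q i)] : Type _ :=
  WithBot (WithTop ((i : ι) × ProperPart (Q i)))

/-- The `k`-summation `⊞^k Q`: identify all the minimal elements and all the maximal
elements of `k` disjoint copies of `Q`. -/
abbrev KSum (k : ℕ) (Q : Type*) [PartialOrder Q] [OrderBot Q] [OrderTop Q] : Type _ :=
  FamSum (fun _ : Fin k => Q)

/-- The rank function of a `k`-summation, induced by a rank function on `Q`. -/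
def ksumRk {k : ℕ} {Q : Type*} [PartialOrder Q] [OrderBot Q] [OrderTop Q] (rk : Q → ℕ) :
    KSum k Q → ℕ :=
  WithBot.recBotCoe 0 (WithTop.recTopCoe (rk ⊤) (fun s => rk s.2.1))

/-- The underlying type of the dual suspension minus its bottom: two new atoms together
with the proper (non-bottom) part of `P`. -/
def DSuspMid (P : Type*) [PartialOrder P] [OrderBot P] : Type _ :=
  Fin 2 ⊕ {x : P // x ≠ ⊥}

instance DSuspMid.partialOrder (P : Type*) [PartialOrder P] [OrderBot P] :
    PartialOrder (DSuspMid P) where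
  le a b :=
    match a, b with
    | .inl i, .inl j => i = j
    | .inl _, .inr _ => True
    | .inr _, .inl _ => False
    | .inr x, .inr y => x ≤ y
  le_refl a := by cases a with
    | inl i => exact rfl
    | inr x => exact le_refl x.1
  le_trans a b c hab hbc := by
    cases a with
    | inl i =>
      cases c with
      | inl k =>
        cases b with
        | inl j => exact Eq.trans (hab : i = j) (hbc : j = k)
        | inr y => exact ((hbc : False)).elim
      | inr z => trivial
    | inr x =>
      cases b with
      | inl j => exact ((hab : False)).elim
      | inr y =>
        cases c with
        | inl k => exact ((hbc : False)).elim
        | inr z => exact le_trans (α := {x : P // x ≠ ⊥}) hab hbc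
  le_antisymm a b hab hba := by
    cases a with
    | inl i =>
      cases b with
      | inl j => exact congrArg Sum.inl (hab : _ = _)
      | inr y => exact ((hba : False)).elim
    | inr x =>
      cases b with
      | inl j => exact ((hab : False)).elim
      | inr y => exact congrArg Sum.inr (le_antisymm (α := {x : P // x ≠ ⊥}) hab hba)

/-- The dual suspension `Σ*(P)`: insert two new elements between `⊥` and the atoms of `P`. -/
abbrev DSusp (P : Type*) [PartialOrder P] [OrderBot P] : Type _ :=
  WithBot (DSuspMid P)

/-- The rank function of the dual suspension induced by a rank function on `P`. -/
def dsuspRk {P : Type*} [PartialOrder P] [OrderBot P] (rk : P → ℕ) : DSusp P → ℕ :=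
  WithBot.recBotCoe 0 (Sum.elim (fun _ => 1) (fun x => rk x.1 + 1))

noncomputable instance DSuspMid.fintype (P : Type*) [PartialOrder P] [OrderBot P] [Fintype P] :
    Fintype (DSuspMid P) := by
  unfold DSuspMid; infer_instance

instance DSuspMid.orderTop (P : Type*) [PartialOrder P] [OrderBot P] [OrderTop P] [Nontrivial P] :
    OrderTop (DSuspMid P) where
  top := Sum.inr ⟨⊤, fun h => by
    rcases exists_pair_ne P with ⟨a, b, hab⟩
    have ha : a = ⊤ := le_antisymm le_top (h.le.trans bot_le)
    have hb : b = ⊤ := le_antisymm le_top (h.le.trans bot_le)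
    exact hab (ha.trans hb.symm)⟩
  le_top a := by
    cases a with
    | inl i => trivial
    | inr x => exact le_top (α := P) (a := x.1)

/-- The butterfly poset `T n` of rank `n`: a `⊥`, a `⊤`, and two elements at each rank
`1, …, n - 1`; any two elements at consecutive ranks are comparable. -/
def Butterfly (n : ℕ) : Type :=
  {p : Fin (n + 1) × Fin 2 // ((p.1 : ℕ) = 0 ∨ (p.1 : ℕ) = n) → p.2 = 0}

namespace Butterfly

instance (n : ℕ) : PartialOrder (Butterfly n) where
  le p q := p = q ∨ (p.1.1 : ℕ) < (q.1.1 : ℕ)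
  le_refl p := Or.inl rfl
  le_trans p q r h₁ h₂ := by
    rcases h₁ with rfl | h₁
    · exact h₂
    · rcases h₂ with rfl | h₂
      · exact Or.inr h₁
      · exact Or.inr (h₁.trans h₂)
  le_antisymm p q h₁ h₂ := by
    rcases h₁ with rfl | h₁
    · rfl
    · rcases h₂ with rfl | h₂
      · rfl
      · exact absurd (h₁.trans h₂) (lt_irrefl _)

instance (n : ℕ) : OrderBot (Butterfly n) where
  bot := ⟨(0, 0), fun _ => rfl⟩
  bot_le p := by
    rcases Nat.eq_zero_or_pos (p.1.1 : ℕ) with h | h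
    · left
      apply Subtype.ext
      have h2 : p.1.2 = 0 := p.2 (Or.inl (by exact_mod_cast h))
      apply Prod.ext
      · exact (Fin.ext (by simpa using h.symm))
      · exact h2.symm
    · exact Or.inr (by simpa using h)

instance (n : ℕ) : OrderTop (Butterfly n) where
  top := ⟨(Fin.last n, 0), fun _ => rfl⟩
  le_top p := by
    rcases eq_or_lt_of_le (Nat.lt_succ_iff.mp p.1.1.isLt) with h | h
    · left
      apply Subtype.ext
      have h2 : p.1.2 = 0 := p.2 (Or.inr h)
      apply Prod.ext
      · exact (Fin.ext (by simpa using h))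
      · exact h2
    · exact Or.inr (by simpa using h)

instance (n : ℕ) : Fintype (Butterfly n) := by
  unfold Butterfly; exact Subtype.fintype _

/-- The rank function of the butterfly poset. -/
def rk {n : ℕ} (p : Butterfly n) : ℕ := p.1.1

end Butterfly

/-- The middle levels (vertices and edges) of the face lattice of a `q`-gon:
`(0, i)` is the `i`-th vertex and `(1, i)` is the edge joining vertices `i` and `i + 1`. -/
def PolyMid (q : ℕ) : Type := Fin 2 × Fin q

instance PolyMid.partialOrder (q : ℕ) : PartialOrder (PolyMid q) where
  le a b := a = b ∨ (a.1 = 0 ∧ b.1 = 1 ∧ (a.2 = b.2 ∨ (a.2 : ℕ) = ((b.2 : ℕ) + 1) % q))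
  le_refl a := Or.inl rfl
  le_trans a b c h₁ h₂ := by
    rcases h₁ with rfl | h₁
    · exact h₂
    · rcases h₂ with rfl | h₂
      · exact Or.inr h₁
      · obtain ⟨hb, _⟩ := h₂
        rw [h₁.2.1] at hb
        exact absurd hb (by decide)
  le_antisymm a b h₁ h₂ := by
    rcases h₁ with rfl | h₁
    · rfl
    · rcases h₂ with rfl | h₂
      · rfl
      · obtain ⟨hb, _⟩ := h₂
        rw [h₁.2.1] at hb
        exact absurd hb (by decide)

/-- The face lattice `P_q` of a `q`-gon. -/
abbrev PolygonFaceLattice (q : ℕ) : Type := WithBot (WithTop (PolyMid q))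

noncomputable instance ProperPart.fintype (Q : Type*) [Fintype Q] [PartialOrder Q]
    [OrderBot Q] [OrderTop Q] : Fintype (ProperPart Q) :=
  Subtype.fintype _

instance WithTop.instFintypeOfFintype {X : Type*} [Fintype X] : Fintype (WithTop X) :=
  inferInstanceAs (Fintype (Option X))

instance WithBot.instFintypeOfFintype {X : Type*} [Fintype X] : Fintype (WithBot X) :=
  inferInstanceAs (Fintype (Option X))

/-!
Each of the two order embeddings `P ↪o Σ*(P)` that send `⊥` to one of the new atoms and fix
every other element has an upper set as image, and every element other than `⊥` lies in one of
these images. So an interval `[x, y]` of `Σ*(P)` with `x ≠ ⊥` is a copy of an interval of `P`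
with all ranks raised by one: it inherits the Euler–Poincaré relation and its number of maximal
chains. For an old element `y`, the interval `[⊥, y]` is `⊥`, the other atom and a copy of
`[⊥, y]_P`, so its signed rank sum is `1 - 1 - 0 = 0`; and a maximal chain of it is `⊥`
followed by a maximal chain of one of the two copies of `[⊥, y]_P`, giving `2 B(ρ(y) - 1)`.
-/

section SatChain

variable {α β : Type*} [PartialOrder α] [PartialOrder β] {x y z c : α} {l t : List α}

theorem isSatChain_iff :
    IsSatChain x y l ↔ l.IsChain (· ⋖ ·) ∧ l.head? = some x ∧ l.getLast? = some y :=
  Iff.rfl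

theorem IsSatChain.eq_cons (h : IsSatChain x y l) : ∃ t, l = x :: t := by
  obtain _ | ⟨a, t⟩ := l
  · simpa using h.2.1
  · obtain rfl : a = x := by simpa using h.2.1
    exact ⟨t, rfl⟩

theorem IsSatChain.mem_Icc (h : IsSatChain x y l) (hz : z ∈ l) : z ∈ Set.Icc x y := by
  refine ⟨h.1.induction (x ≤ ·) l (fun _ _ hc h => h.trans hc.le) (fun hne => ?_) z hz,
    h.1.backwards_induction (· ≤ y) l (fun _ _ hc h => hc.le.trans h) (fun hne => ?_) z hz⟩
  · rw [(List.head_eq_iff_head?_eq_some hne).2 h.2.1]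
  · rw [(List.getLast_eq_iff_getLast?_eq_some hne).2 h.2.2]

theorem isSatChain_singleton_iff : IsSatChain x y [z] ↔ z = x ∧ z = y := by
  simp [isSatChain_iff, eq_comm]

theorem isSatChain_cons_cons_iff :
    IsSatChain x y (x :: c :: t) ↔ x ⋖ c ∧ IsSatChain c y (c :: t) := by
  simp [isSatChain_iff, List.getLast?_cons_cons, and_assoc]

theorem isSatChain_self_iff : IsSatChain x x l ↔ l = [x] := by
  refine ⟨fun h => ?_, fun h => h ▸ isSatChain_singleton_iff.2 ⟨rfl, rfl⟩⟩
  obtain ⟨_ | ⟨c, t⟩, rfl⟩ := h.eq_cons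
  · rfl
  · have hc := isSatChain_cons_cons_iff.1 h
    exact absurd (h.mem_Icc (by simp)).2 hc.1.lt.not_ge

theorem chainCount_self (x : α) : chainCount x x = 1 := by
  rw [chainCount, Nat.card_eq_one_iff_exists]
  exact ⟨⟨[x], isSatChain_self_iff.2 rfl⟩, fun l => Subtype.ext (isSatChain_self_iff.1 l.2)⟩

theorem CovBy.chainCount_eq_one (hxy : x ⋖ y) : chainCount x y = 1 := by
  have key : ∀ l, IsSatChain x y l ↔ l = [x, y] := by
    refine fun l => ⟨fun h => ?_, fun h => h ▸ isSatChain_cons_cons_iff.2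
      ⟨hxy, isSatChain_singleton_iff.2 ⟨rfl, rfl⟩⟩⟩
    obtain ⟨_ | ⟨c, t⟩, rfl⟩ := h.eq_cons
    · exact absurd (isSatChain_singleton_iff.1 h).2 hxy.ne
    · obtain ⟨hc, hct⟩ := isSatChain_cons_cons_iff.1 h
      obtain rfl : c = y := (hct.mem_Icc (by simp)).2.eq_of_not_lt fun hlt => hxy.2 hc.lt hlt
      rw [isSatChain_self_iff.1 hct]
  rw [chainCount, Nat.card_eq_one_iff_exists]
  exact ⟨⟨[x, y], (key _).2 rfl⟩, fun l => Subtype.ext ((key _).1 l.2)⟩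

variable (f : α ↪o β) (hf : (Set.range f).OrdConnected)
include hf

theorem isSatChain_map_iff : IsSatChain (f x) (f y) (l.map f) ↔ IsSatChain x y l := by
  simp [isSatChain_iff, List.isChain_map, hf.apply_covBy_apply_iff, f.injective.eq_iff]

theorem IsSatChain.exists_map_eq {m : List β} (h : IsSatChain (f x) (f y) m) :
    ∃ l, IsSatChain x y l ∧ l.map f = m := by
  obtain ⟨l, rfl⟩ : m ∈ Set.range (List.map f) := by
    rw [Set.range_list_map]
    exact fun z hz => hf.out (Set.mem_range_self x) (Set.mem_range_self y) (h.mem_Icc hz)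
  exact ⟨l, (isSatChain_map_iff f hf).1 h, rfl⟩

theorem chainCount_map (x y : α) : chainCount (f x) (f y) = chainCount x y := by
  refine (Nat.card_congr (Equiv.ofBijective
    (fun l : {l // IsSatChain x y l} => ⟨l.1.map f, (isSatChain_map_iff f hf).2 l.2⟩)
    ⟨fun l l' h => Subtype.ext ?_, fun m => ?_⟩)).symm
  · exact List.map_injective_iff.2 f.injective (congrArg Subtype.val h)
  · obtain ⟨l, hl, hlm⟩ := m.2.exists_map_eq f hf
    exact ⟨⟨l, hl⟩, Subtype.ext hlm⟩

end SatChain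

section SignedRankSum

open Finset

variable {α β : Type*} [Fintype α] [Fintype β] [PartialOrder α] [PartialOrder β]

-- `Finset.Icc` would need a `LocallyFiniteOrder` instance; fixing the filter (and its
-- decidability instance) once makes intervals of different posets rewrite uniformly.
noncomputable def intervalFinset (x y : α) : Finset α :=
  univ.filter fun z => x ≤ z ∧ z ≤ y

@[simp] theorem mem_intervalFinset {x y z : α} :
    z ∈ intervalFinset x y ↔ x ≤ z ∧ z ≤ y := by
  simp [intervalFinset]

noncomputable def signedRankSum (rk : α → ℕ) (x y : α) : ℤ :=
  ∑ z ∈ intervalFinset x y, (-1) ^ rk z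

theorem eulerPoincare_iff_signedRankSum_eq_zero (rk : α → ℕ) (x y : α) :
    EulerPoincare rk x y ↔ signedRankSum rk x y = 0 := by
  have hsign : ∀ z, (-1 : ℤ) ^ rk z = if Even (rk z) then 1 else -1 := fun z => by
    split_ifs with h
    · exact h.neg_one_pow
    · exact (Nat.not_even_iff_odd.1 h).neg_one_pow
  simp only [signedRankSum, intervalFinset, hsign, sum_ite, sum_const, filter_filter, and_assoc,
    smul_neg, nsmul_eq_mul, mul_one, ← sub_eq_add_neg, sub_eq_zero, EulerPoincare]
  exact Nat.cast_inj.symm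

theorem CovBy.signedRankSum_eq_zero {rk : α → ℕ} {x y : α} (h : x ⋖ y)
    (hr : rk y = rk x + 1) :
    signedRankSum rk x y = 0 := by
  have hIcc : intervalFinset x y = {x, y} := by
    ext z
    simp only [mem_intervalFinset, mem_insert, mem_singleton]
    constructor
    · rintro ⟨hxz, hzy⟩
      exact h.eq_or_eq hxz hzy
    · rintro (rfl | rfl)
      exacts [⟨le_rfl, h.le⟩, ⟨h.le, le_rfl⟩]
  rw [signedRankSum, hIcc, sum_pair h.ne, hr, pow_succ]
  ring

theorem intervalFinset_map (f : α ↪o β) (hf : (Set.range f).OrdConnected) (x y : α) :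
    intervalFinset (f x) (f y) = (intervalFinset x y).map f.toEmbedding := by
  ext z
  simp only [mem_intervalFinset, mem_map, RelEmbedding.coe_toEmbedding]
  constructor
  · rintro hz
    obtain ⟨w, rfl⟩ := hf.out (Set.mem_range_self x) (Set.mem_range_self y) hz
    exact ⟨w, by simpa using hz, rfl⟩
  · rintro ⟨w, hw, rfl⟩
    simpa using hw

theorem signedRankSum_map {rk : α → ℕ} {rk' : β → ℕ} (f : α ↪o β)
    (hf : (Set.range f).OrdConnected) (hr : ∀ z, rk' (f z) = rk z + 1) (x y : α) :
    signedRankSum rk' (f x) (f y) = -signedRankSum rk x y := by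
  simp [signedRankSum, intervalFinset_map f hf, hr, pow_succ]

end SignedRankSum

theorem IsRankFunction.pos_of_ne_bot {α : Type*} [PartialOrder α] [OrderBot α] [Finite α]
    {rk : α → ℕ} (hrk : IsRankFunction rk) {v : α} (hv : v ≠ ⊥) : 0 < rk v := by
  obtain ⟨w, -, hw⟩ := exists_le_covBy_of_lt (bot_lt_iff_ne_bot.2 hv)
  rw [hrk.2 w v hw]
  exact Nat.succ_pos _


namespace DSuspMid

variable {P : Type*} [PartialOrder P] [OrderBot P] {i j : Fin 2} {x y : {x : P // x ≠ ⊥}}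

abbrev atom (i : Fin 2) : DSuspMid P := Sum.inl i

abbrev old (x : {x : P // x ≠ ⊥}) : DSuspMid P := Sum.inr x

@[simp] theorem atom_le_atom_iff : atom (P := P) i ≤ atom j ↔ i = j := Iff.rfl

@[simp] theorem atom_le_old : atom i ≤ old x := trivial

@[simp] theorem not_old_le_atom : ¬old x ≤ atom i := id

@[simp] theorem old_le_old_iff : old x ≤ old y ↔ x.1 ≤ y.1 := Iff.rfl

end DSuspMid

namespace DSusp

open DSuspMid

variable {P : Type*} [PartialOrder P] [OrderBot P]

noncomputable def embed (i : Fin 2) : P ↪o DSusp P :=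
  OrderEmbedding.ofMapLEIff
    (fun z => if h : z = ⊥ then ((atom i : DSuspMid P) : DSusp P)
      else ((old ⟨z, h⟩ : DSuspMid P) : DSusp P))
    (fun a b => by
      by_cases ha : a = ⊥ <;> by_cases hb : b = ⊥ <;>
        simp [ha, hb, WithBot.coe_le_coe])

theorem embed_bot (i : Fin 2) : embed i (⊥ : P) = ((atom i : DSuspMid P) : DSusp P) :=
  dif_pos rfl

theorem embed_of_ne_bot (i : Fin 2) {v : P} (hv : v ≠ ⊥) :
    embed i v = ((old ⟨v, hv⟩ : DSuspMid P) : DSusp P) :=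
  dif_neg hv

theorem eq_bot_or_exists_embed (y : DSusp P) :
    y = ⊥ ∨ (∃ i, y = embed i ⊥) ∨ ∃ v ≠ ⊥, y = embed 0 v := by
  induction y using WithBot.recBotCoe with
  | bot => exact Or.inl rfl
  | coe u =>
    cases u with
    | inl i => exact Or.inr (Or.inl ⟨i, (embed_bot i).symm⟩)
    | inr v => exact Or.inr (Or.inr ⟨v.1, v.2, (embed_of_ne_bot 0 v.2).symm⟩)

theorem range_embed (i : Fin 2) : Set.range (embed (P := P) i) = Set.Ici (embed i (⊥ : P)) := by
  refine Set.Subset.antisymm (Set.range_subset_iff.2 fun z => (embed i).monotone bot_le)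
    fun y hy => ?_
  rcases eq_bot_or_exists_embed y with rfl | ⟨j, rfl⟩ | ⟨v, hv, rfl⟩
  · exact absurd hy (by simp [embed_bot, Set.mem_Ici])
  · obtain rfl : i = j := by simpa [embed_bot, Set.mem_Ici] using hy
    exact Set.mem_range_self _
  · exact ⟨v, by rw [embed_of_ne_bot i hv, embed_of_ne_bot 0 hv]⟩

theorem ordConnected_range_embed (i : Fin 2) :
    (Set.range (embed (P := P) i)).OrdConnected := by
  rw [range_embed]
  exact Set.ordConnected_Ici

theorem embed_ne_bot (i : Fin 2) (z : P) : embed i z ≠ ⊥ := by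
  by_cases hz : z = ⊥
  · rw [hz, embed_bot]
    exact WithBot.coe_ne_bot
  · rw [embed_of_ne_bot i hz]
    exact WithBot.coe_ne_bot

theorem embed_eq_embed_of_ne_bot (i j : Fin 2) {v : P} (hv : v ≠ ⊥) :
    embed i v = embed j v := by
  rw [embed_of_ne_bot i hv, embed_of_ne_bot j hv]

theorem embed_bot_injective : Function.Injective fun i : Fin 2 => embed i (⊥ : P) := by
  intro i j h
  simp only [embed_bot] at h
  exact Sum.inl_injective (WithBot.coe_injective h)

theorem bot_covBy_embed_bot (i : Fin 2) : (⊥ : DSusp P) ⋖ embed i ⊥ := by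
  rw [embed_bot]
  refine WithBot.bot_covBy_coe.2 fun b hb => ?_
  cases b with
  | inl j =>
    obtain rfl := atom_le_atom_iff.1 hb
    exact le_rfl
  | inr w => exact absurd hb not_old_le_atom

theorem eq_embed_bot_of_bot_covBy {c : DSusp P} (h : ⊥ ⋖ c) : ∃ i, c = embed i ⊥ := by
  rcases eq_bot_or_exists_embed c with rfl | hc | ⟨v, hv, rfl⟩
  · exact absurd h.lt (lt_irrefl _)
  · exact hc
  · exact absurd ((embed 0).lt_iff_lt.2 (bot_lt_iff_ne_bot.2 hv))
      (h.2 (bot_covBy_embed_bot 0).lt)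

theorem exists_embed_of_ne_bot {x y : DSusp P} (hx : x ≠ ⊥) (hxy : x ≤ y) :
    ∃ i u v, x = embed i u ∧ y = embed i v := by
  obtain ⟨i, u, rfl⟩ : ∃ i u, x = embed i u := by
    rcases eq_bot_or_exists_embed x with rfl | ⟨i, rfl⟩ | ⟨u, -, rfl⟩
    exacts [absurd rfl hx, ⟨i, ⊥, rfl⟩, ⟨0, u, rfl⟩]
  obtain ⟨v, rfl⟩ : y ∈ Set.range (embed i) := by
    rw [range_embed]
    exact ((embed i).monotone bot_le).trans hxy
  exact ⟨i, u, v, rfl, rfl⟩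

@[simp] theorem dsuspRk_bot (rk : P → ℕ) : dsuspRk rk (⊥ : DSusp P) = 0 := rfl

theorem dsuspRk_embed {rk : P → ℕ} (h0 : rk ⊥ = 0) (i : Fin 2) (z : P) :
    dsuspRk rk (embed i z) = rk z + 1 := by
  by_cases hz : z = ⊥
  · rw [hz, embed_bot, h0]
    rfl
  · rw [embed_of_ne_bot i hz]
    rfl

theorem isSatChain_bot_cons_map {v : P} (hv : v ≠ ⊥) (i : Fin 2) {l : List P}
    (hl : IsSatChain ⊥ v l) : IsSatChain ⊥ (embed 0 v) (⊥ :: l.map (embed i)) := by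
  obtain ⟨t, rfl⟩ := hl.eq_cons
  have := (isSatChain_map_iff (embed i) (ordConnected_range_embed i)).2 hl
  rw [embed_eq_embed_of_ne_bot i 0 hv, List.map_cons] at this
  exact isSatChain_cons_cons_iff.2 ⟨bot_covBy_embed_bot i, this⟩

theorem exists_bot_cons_map_of_isSatChain {v : P} (hv : v ≠ ⊥) {m : List (DSusp P)}
    (hm : IsSatChain ⊥ (embed 0 v) m) :
    ∃ i l, IsSatChain ⊥ v l ∧ ⊥ :: l.map (embed i) = m := by
  obtain ⟨_ | ⟨c, t⟩, rfl⟩ := hm.eq_cons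
  · exact absurd (isSatChain_singleton_iff.1 hm).2 (embed_ne_bot 0 v).symm
  obtain ⟨hc, hct⟩ := isSatChain_cons_cons_iff.1 hm
  obtain ⟨i, rfl⟩ := eq_embed_bot_of_bot_covBy hc
  rw [embed_eq_embed_of_ne_bot 0 i hv] at hct
  obtain ⟨l, hl, hlm⟩ := hct.exists_map_eq (embed i) (ordConnected_range_embed i)
  exact ⟨i, l, hl, by rw [hlm]⟩

theorem chainCount_bot_embed {v : P} (hv : v ≠ ⊥) :
    chainCount ⊥ (embed 0 v) = 2 * chainCount ⊥ v := by
  let e : Fin 2 × {l // IsSatChain ⊥ v l} ≃ {l // IsSatChain ⊥ (embed 0 v) l} :=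
    Equiv.ofBijective
      (fun p => ⟨⊥ :: p.2.1.map (embed p.1), isSatChain_bot_cons_map hv p.1 p.2.2⟩) <| by
      refine ⟨?_, fun m => ?_⟩
      · rintro ⟨i, l, hl⟩ ⟨j, l', hl'⟩ h
        obtain ⟨t, rfl⟩ := hl.eq_cons
        obtain ⟨t', rfl⟩ := hl'.eq_cons
        simp only [Subtype.mk.injEq, List.map_cons, List.cons.injEq, true_and] at h
        obtain rfl := embed_bot_injective h.1
        simp [List.map_injective_iff.2 (embed i).injective h.2]
      · obtain ⟨i, l, hl, hlm⟩ := exists_bot_cons_map_of_isSatChain hv m.2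
        exact ⟨(i, ⟨l, hl⟩), Subtype.ext hlm⟩
  rw [chainCount, ← Nat.card_congr e, Nat.card_prod, Nat.card_fin, chainCount]

section Finite

open Finset

variable [Fintype P]

theorem intervalFinset_bot_embed {v : P} (hv : v ≠ ⊥) :
    intervalFinset ⊥ (embed 0 v) =
      insert ⊥ (insert (embed 1 ⊥) (intervalFinset (embed 0 ⊥) (embed 0 v))) := by
  ext z
  rcases eq_bot_or_exists_embed z with rfl | ⟨j, rfl⟩ | ⟨w, hw, rfl⟩
  · simp
  · fin_cases j <;> simp [embed_bot, embed_of_ne_bot _ hv, WithBot.coe_le_coe]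
  · simp [embed_bot, embed_of_ne_bot _ hv, embed_of_ne_bot _ hw, WithBot.coe_le_coe]

theorem signedRankSum_bot_embed {rk : P → ℕ} (h0 : rk ⊥ = 0) {v : P} (hv : v ≠ ⊥) :
    signedRankSum (dsuspRk rk) ⊥ (embed 0 v) = -signedRankSum rk ⊥ v := by
  rw [signedRankSum, intervalFinset_bot_embed hv, sum_insert, sum_insert, ← signedRankSum,
    signedRankSum_map (embed 0) (ordConnected_range_embed 0) (dsuspRk_embed h0 0),
    dsuspRk_embed h0, h0]
  · simp
  all_goals simp [embed_bot, WithBot.coe_le_coe]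

theorem isEulerian_dsuspRk {rk : P → ℕ} (h0 : rk ⊥ = 0) (hE : IsEulerian rk) :
    IsEulerian (dsuspRk rk) := by
  intro x y hxy
  rw [eulerPoincare_iff_signedRankSum_eq_zero]
  by_cases hx : x = ⊥
  · subst hx
    rcases eq_bot_or_exists_embed y with rfl | ⟨i, rfl⟩ | ⟨v, hv, rfl⟩
    · exact absurd hxy (lt_irrefl _)
    · exact (bot_covBy_embed_bot i).signedRankSum_eq_zero (by rw [dsuspRk_embed h0, h0]; rfl)
    · rw [signedRankSum_bot_embed h0 hv, (eulerPoincare_iff_signedRankSum_eq_zero _ _ _).1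
        (hE ⊥ v (bot_lt_iff_ne_bot.2 hv)), neg_zero]
  · obtain ⟨i, u, v, rfl, rfl⟩ := exists_embed_of_ne_bot hx hxy.le
    rw [signedRankSum_map (embed i) (ordConnected_range_embed i) (dsuspRk_embed h0 i),
      (eulerPoincare_iff_signedRankSum_eq_zero _ _ _).1 (hE u v ((embed i).lt_iff_lt.1 hxy)),
      neg_zero]

end Finite

end DSusp

/-- If `P` is Eulerian then its dual suspension `Σ*(P)` is Eulerian;
moreover if `P` is binomial with factorial function `B`, then `Σ*(P)` is a Sheffer poset with
Sheffer factorial function `D n = 2 * B (n - 1)` for `n ≥ 2`. -/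
theorem statement10 {P : Type*} [Fintype P] [PartialOrder P] [OrderBot P]
    (rk : P → ℕ) (hrk : IsRankFunction rk) (hE : IsEulerian rk) :
    IsEulerian (dsuspRk rk) ∧
      ∀ B : ℕ → ℕ, IsBinomial rk B →
        ∃ D : ℕ → ℕ, IsSheffer (dsuspRk rk) B D ∧ ∀ n, 2 ≤ n → D n = 2 * B (n - 1) := by
  refine ⟨DSusp.isEulerian_dsuspRk hrk.1 hE, fun B hB =>
    ⟨fun n => if n ≤ 1 then 1 else 2 * B (n - 1), ⟨fun y => ?_, fun x y hx hxy => ?_⟩,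
      fun n hn => if_neg (by omega)⟩⟩
  · rcases DSusp.eq_bot_or_exists_embed y with rfl | ⟨i, rfl⟩ | ⟨v, hv, rfl⟩
    · simp [chainCount_self]
    · simp [(DSusp.bot_covBy_embed_bot i).chainCount_eq_one, DSusp.dsuspRk_embed hrk.1, hrk.1]
    · have hv_pos := hrk.pos_of_ne_bot hv
      rw [DSusp.chainCount_bot_embed hv, hB ⊥ v bot_le, DSusp.dsuspRk_embed hrk.1, hrk.1]
      exact (if_neg (by omega)).symm
  · obtain ⟨i, u, v, rfl, rfl⟩ := DSusp.exists_embed_of_ne_bot hx hxy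
    rw [chainCount_map _ (DSusp.ordConnected_range_embed i),
      hB u v ((DSusp.embed i).le_iff_le.1 hxy), DSusp.dsuspRk_embed hrk.1,
      DSusp.dsuspRk_embed hrk.1, Nat.add_sub_add_right]
end

section
/- In an Eulerian Sheffer poset of rank n, for every 2 ≤ m ≤ n the identity 1 + Σ_{k=1}^{m} (−1)^k · D(m)/(D(k)·B(m−k)) = 0 holds. -/
open scoped Classical

/-! Fix `y` of rank `m`. Every maximal chain of `[⊥, y]` passes through exactly one element of
each rank `k`, and cutting it there identifies the maximal chains of `[⊥, y]` with pairs of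
maximal chains of `[⊥, z]` and `[z, y]`, `rk z = k`. In a Sheffer poset this says that `[⊥, y]`
has exactly `D(m) / (D(k) B(m - k))` elements of rank `k` for `1 ≤ k ≤ m`, and it has one element
of rank `0`. The identity is then the Euler–Poincaré relation of `[⊥, y]`, read as
`∑_k (-1)^k · #{z ∈ [⊥, y] | rk z = k} = 0`. -/

section SatChain

variable {α : Type*} [PartialOrder α] {x y z : α} {l l₁ l₂ : List α}

theorem isSatChain_iff_head_getLast : IsSatChain x y l ↔
    ∃ hl : l ≠ [], l.IsChain (· ⋖ ·) ∧ l.head hl = x ∧ l.getLast hl = y := by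
  refine ⟨fun ⟨hc, hx, hy⟩ => ?_, fun ⟨hl, hc, hx, hy⟩ => ?_⟩
  · have hl : l ≠ [] := by rintro rfl; simp at hx
    rw [List.head?_eq_some_head hl, Option.some_inj] at hx
    rw [List.getLast?_eq_some_getLast hl, Option.some_inj] at hy
    exact ⟨hl, hc, hx, hy⟩
  · exact ⟨hc, by rw [List.head?_eq_some_head hl, hx],
      by rw [List.getLast?_eq_some_getLast hl, hy]⟩

theorem IsSatChain.le (h : IsSatChain x y l) : x ≤ y := by
  obtain ⟨hl, hc, rfl, rfl⟩ := isSatChain_iff_head_getLast.mp h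
  have := Relation.ReflTransGen.mono (fun _ _ hab => hab.le) _ _
    (List.relationReflTransGen_of_exists_isChain l hc hl)
  rwa [Relation.reflTransGen_eq_self] at this

theorem IsSatChain.eq_cons_tail (h : IsSatChain x y l) : l = x :: l.tail := by
  obtain ⟨t, rfl⟩ := List.head?_eq_some_iff.mp h.2.1
  rfl

theorem IsSatChain.append (h₁ : IsSatChain x z l₁) (h₂ : IsSatChain z y l₂) :
    IsSatChain x y (l₁ ++ l₂.tail) := by
  obtain ⟨hc₁, hx, hz⟩ := h₁
  have hl₂ := h₂.eq_cons_tail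
  obtain ⟨hc₂, -, hy⟩ := h₂
  rw [hl₂] at hc₂ hy
  refine ⟨hc₁.append (List.isChain_cons.mp hc₂).2 ?_, ?_, ?_⟩
  · rw [hz]
    exact fun a ha => (Option.mem_some_iff.mp ha) ▸ (List.isChain_cons.mp hc₂).1
  · obtain ⟨t, rfl⟩ := List.head?_eq_some_iff.mp hx
    simp
  · rw [List.getLast?_append]
    cases ht : l₂.tail <;> simp_all

theorem IsSatChain.take (h : IsSatChain x y l) {j : ℕ} (hj : j < l.length) :
    IsSatChain x l[j] (l.take (j + 1)) :=
  ⟨h.1.take _, by simpa [List.head?_take] using h.2.1, by simp [List.getLast?_take, hj]⟩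

theorem IsSatChain.drop (h : IsSatChain x y l) {j : ℕ} (hj : j < l.length) :
    IsSatChain l[j] y (l.drop j) :=
  ⟨h.1.drop _, by simp [hj], by simpa [List.getLast?_drop, hj.not_ge] using h.2.2⟩

theorem exists_isSatChain [Fintype α] (hxy : x ≤ y) : ∃ l, IsSatChain x y l := by
  let := Fintype.toLocallyFiniteOrder (α := α)
  obtain ⟨l, hl⟩ :=
    List.exists_isChain_ne_nil_of_relationReflTransGen (le_iff_reflTransGen_covBy.mp hxy)
  exact ⟨l, isSatChain_iff_head_getLast.mpr hl⟩

instance [Fintype α] (x y : α) : Finite {l : List α // IsSatChain x y l} := by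
  refine Set.Finite.subset (List.finite_length_le α (Fintype.card α)) fun l hl => ?_
  exact List.Nodup.length_le_card (List.isChain_iff_pairwise.mp (hl.1.imp fun _ _ h => h.lt)).nodup

theorem chainCount_pos [Fintype α] (hxy : x ≤ y) : 0 < chainCount x y := by
  obtain ⟨l, hl⟩ := exists_isSatChain hxy
  exact Nat.card_pos_iff.mpr ⟨⟨⟨l, hl⟩⟩, inferInstance⟩

variable {rk : α → ℕ}

theorem rk_getElem_of_isChain (hcov : ∀ a b : α, a ⋖ b → rk b = rk a + 1)
    (hl : l.IsChain (· ⋖ ·)) :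
    ∀ (i : ℕ) (hi : i < l.length), rk l[i] = rk (l[0]'(by omega)) + i
  | 0, _ => rfl
  | i + 1, hi => by
    rw [hcov _ _ (List.isChain_iff_getElem.mp hl i hi), rk_getElem_of_isChain hcov hl i]
    omega

theorem IsSatChain.rk_getElem (hcov : ∀ a b : α, a ⋖ b → rk b = rk a + 1)
    (h : IsSatChain x y l) {i : ℕ} (hi : i < l.length) : rk l[i] = rk x + i := by
  rw [rk_getElem_of_isChain hcov h.1 i hi]
  congr
  exact (List.getElem?_eq_some_iff.mp (List.head?_eq_getElem? ▸ h.2.1)).2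

theorem IsSatChain.rk_eq (hcov : ∀ a b : α, a ⋖ b → rk b = rk a + 1) (h : IsSatChain x y l) :
    rk y = rk x + (l.length - 1) := by
  have hl := h.eq_cons_tail
  have hy : l[l.length - 1]'(by rw [hl]; simp) = y :=
    (List.getElem?_eq_some_iff.mp (List.getLast?_eq_getElem? ▸ h.2.2)).2
  rw [← hy, h.rk_getElem hcov]

theorem IsSatChain.length_eq (hcov : ∀ a b : α, a ⋖ b → rk b = rk a + 1)
    (h : IsSatChain x y l) : l.length = rk y - rk x + 1 := by
  have := h.rk_eq hcov
  have : l.length = l.tail.length + 1 := by rw [h.eq_cons_tail]; rfl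
  omega

theorem rk_strictMono [Fintype α] (hcov : ∀ a b : α, a ⋖ b → rk b = rk a + 1) :
    StrictMono rk := by
  intro x y hxy
  obtain ⟨l, hl⟩ := exists_isSatChain hxy.le
  rw [hl.rk_eq hcov]
  by_contra! hlen
  have ht : l.tail = [] := List.eq_nil_of_length_eq_zero (by simp; omega)
  have hl' : l = [x] := ht ▸ hl.eq_cons_tail
  exact hxy.ne (by simpa [hl'] using hl.2.2)

end SatChain

section RankLevel

variable {α : Type*} [PartialOrder α] [Fintype α] {rk : α → ℕ} {x y : α} {k : ℕ}

noncomputable def rankLevel (rk : α → ℕ) (x y : α) (k : ℕ) : Finset α :=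
  {z | x ≤ z ∧ z ≤ y ∧ rk z = k}

theorem mem_rankLevel {z : α} : z ∈ rankLevel rk x y k ↔ x ≤ z ∧ z ≤ y ∧ rk z = k := by
  simp [rankLevel]

theorem chainCount_eq_sum_rankLevel (hcov : ∀ a b : α, a ⋖ b → rk b = rk a + 1)
    (hxk : rk x ≤ k) (hky : k ≤ rk y) :
    chainCount x y = ∑ z ∈ rankLevel rk x y k, chainCount x z * chainCount z y := by
  let glue : (Σ z : rankLevel rk x y k,
      {l // IsSatChain x (z : α) l} × {l // IsSatChain (z : α) y l}) → {l // IsSatChain x y l} :=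
    fun p => ⟨p.2.1.1 ++ p.2.2.1.tail, p.2.1.2.append p.2.2.2⟩
  have hinj : glue.Injective := by
    rintro ⟨z, ⟨l₁, h₁⟩, ⟨l₂, h₂⟩⟩ ⟨z', ⟨l₁', h₁'⟩, ⟨l₂', h₂'⟩⟩ heq
    simp only [glue, Subtype.mk.injEq] at heq
    have hlen : l₁.length = l₁'.length := by
      rw [h₁.length_eq hcov, h₁'.length_eq hcov, (mem_rankLevel.mp z.2).2.2,
        (mem_rankLevel.mp z'.2).2.2]
    obtain ⟨rfl, htail⟩ := List.append_inj heq hlen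
    obtain rfl : z = z' := Subtype.ext (Option.some_injective _ (h₁.2.2.symm.trans h₁'.2.2))
    obtain rfl : l₂ = l₂' := by rw [h₂.eq_cons_tail, h₂'.eq_cons_tail, htail]
    rfl
  have hsurj : glue.Surjective := by
    rintro ⟨l, hl⟩
    have hj : k - rk x < l.length := by
      rw [hl.length_eq hcov]
      omega
    refine ⟨⟨⟨l[k - rk x], mem_rankLevel.mpr ⟨(hl.take hj).le, (hl.drop hj).le, ?_⟩⟩,
      ⟨_, hl.take hj⟩, ⟨_, hl.drop hj⟩⟩, Subtype.ext ?_⟩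
    · rw [hl.rk_getElem hcov hj]
      omega
    · change l.take _ ++ (l.drop _).tail = l
      rw [List.tail_drop, List.take_append_drop]
  rw [chainCount, ← Nat.card_congr (Equiv.ofBijective glue ⟨hinj, hsurj⟩), Nat.card_sigma]
  simp only [Nat.card_prod]
  exact Finset.sum_coe_sort _ fun z => chainCount x z * chainCount z y

theorem EulerPoincare.sum_neg_one_pow {R : Type*} [Ring R] (h : EulerPoincare rk x y) :
    ∑ z ∈ Finset.univ.filter (fun z => x ≤ z ∧ z ≤ y), (-1 : R) ^ rk z = 0 := by
  rw [← Finset.sum_filter_add_sum_filter_not _ (fun z => Even (rk z))]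
  rw [Finset.sum_congr rfl fun z hz => (Finset.mem_filter.mp hz).2.neg_one_pow,
    Finset.sum_congr rfl fun z hz =>
      (Nat.not_even_iff_odd.mp (Finset.mem_filter.mp hz).2).neg_one_pow]
  simp only [Finset.sum_const, Finset.filter_filter, and_assoc]
  rw [EulerPoincare] at h
  rw [h, smul_neg, add_neg_cancel]

theorem EulerPoincare.sum_neg_one_pow_mul_card_rankLevel {R : Type*} [Ring R]
    (hmono : Monotone rk) (h : EulerPoincare rk x y) :
    ∑ k ∈ Finset.Icc (rk x) (rk y), (-1 : R) ^ k * (rankLevel rk x y k).card = 0 := by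
  rw [← h.sum_neg_one_pow, ← Finset.sum_fiberwise_of_maps_to (g := rk)
    (t := Finset.Icc (rk x) (rk y)) fun z hz => ?_]
  · refine Finset.sum_congr rfl fun k _ => ?_
    have hlevel : {z ∈ Finset.univ.filter (fun z => x ≤ z ∧ z ≤ y) | rk z = k} =
        rankLevel rk x y k := by
      ext z
      simp [mem_rankLevel, and_assoc]
    rw [hlevel, Finset.sum_congr rfl fun z hz => by rw [(mem_rankLevel.mp hz).2.2],
      Finset.sum_const, nsmul_eq_mul']
  · obtain ⟨hxz, hzy⟩ := (Finset.mem_filter.mp hz).2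
    exact Finset.mem_Icc.mpr ⟨hmono hxz, hmono hzy⟩

variable [OrderBot α] {B D : ℕ → ℕ}

theorem IsRankFunction.exists_rk_eq (hrk : IsRankFunction rk) {m : ℕ} (hm : m ≤ rk y) :
    ∃ z ≤ y, rk z = m := by
  obtain ⟨l, hl⟩ := exists_isSatChain (bot_le : ⊥ ≤ y)
  have hm : m < l.length := by
    rw [hl.length_eq hrk.2, hrk.1]
    omega
  exact ⟨l[m], (hl.drop hm).le, by rw [hl.rk_getElem hrk.2 hm, hrk.1, zero_add]⟩

theorem IsRankFunction.card_rankLevel_bot_zero (hrk : IsRankFunction rk) (y : α) :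
    (rankLevel rk ⊥ y 0).card = 1 := by
  refine Finset.card_eq_one.mpr ⟨⊥, Finset.ext fun z => ?_⟩
  rw [mem_rankLevel, Finset.mem_singleton]
  refine ⟨fun ⟨_, _, hz⟩ => ?_, fun hz => ⟨hz.ge, hz ▸ bot_le, hz ▸ hrk.1⟩⟩
  by_contra hne
  have := rk_strictMono hrk.2 (bot_lt_iff_ne_bot.mpr hne)
  omega

theorem IsSheffer.eq_card_rankLevel_mul (hrk : IsRankFunction rk) (hS : IsSheffer rk B D)
    (hk : 1 ≤ k) (hky : k ≤ rk y) :
    D (rk y) = (rankLevel rk ⊥ y k).card * (D k * B (rk y - k)) := by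
  rw [← hS.1 y, chainCount_eq_sum_rankLevel hrk.2 (hrk.1 ▸ Nat.zero_le k) hky]
  refine Finset.sum_const_nat fun z hz => ?_
  obtain ⟨-, hzy, rfl⟩ := mem_rankLevel.mp hz
  have hz : z ≠ ⊥ := by
    rintro rfl
    rw [hrk.1] at hk
    omega
  rw [hS.1 z, hS.2 z y hz hzy]

theorem IsSheffer.div_eq_card_rankLevel {K : Type*} [Field K] [CharZero K]
    (hrk : IsRankFunction rk) (hS : IsSheffer rk B D) (hk : 1 ≤ k) (hky : k ≤ rk y) :
    (D (rk y) : K) / (D k * B (rk y - k)) = (rankLevel rk ⊥ y k).card := by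
  have h := hS.eq_card_rankLevel_mul hrk hk hky
  have hD : D (rk y) ≠ 0 := by
    rw [← hS.1 y]
    exact (chainCount_pos bot_le).ne'
  have hden : ((D k * B (rk y - k) : ℕ) : K) ≠ 0 :=
    Nat.cast_ne_zero.mpr (right_ne_zero_of_mul (h ▸ hD))
  rw [h, Nat.cast_mul, mul_div_assoc, ← Nat.cast_mul, div_self hden, mul_one]

end RankLevel

/-- In an Eulerian Sheffer poset of rank `n`, for every `2 ≤ m ≤ n` we have
`1 + ∑_{k=1}^{m} (-1)^k D(m) / (D(k) B(m-k)) = 0`. -/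
theorem statement12 {α : Type*} [Fintype α] [PartialOrder α] [BoundedOrder α]
    (rk : α → ℕ) (B D : ℕ → ℕ) (hrk : IsRankFunction rk) (hS : IsSheffer rk B D)
    (hE : IsEulerian rk) (n : ℕ) (hrank : rk ⊤ = n) (m : ℕ) (hm2 : 2 ≤ m) (hmn : m ≤ n) :
    (1 : ℚ) + ∑ k ∈ Finset.Icc 1 m,
        (-1 : ℚ) ^ k * (D m : ℚ) / ((D k : ℚ) * (B (m - k) : ℚ)) = 0 := by
  obtain ⟨y, -, rfl⟩ := hrk.exists_rk_eq (hrank ▸ hmn : m ≤ rk ⊤)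
  have hy : ⊥ < y := bot_lt_iff_ne_bot.mpr fun h => by rw [h, hrk.1] at hm2; omega
  have hEuler := (hE ⊥ y hy).sum_neg_one_pow_mul_card_rankLevel (R := ℚ)
    (rk_strictMono hrk.2).monotone
  rw [hrk.1, ← Finset.insert_Icc_add_one_left_eq_Icc (Nat.zero_le _),
    Finset.sum_insert (by simp), hrk.card_rankLevel_bot_zero] at hEuler
  rw [← hEuler, pow_zero, Nat.cast_one, one_mul]
  refine congrArg _ (Finset.sum_congr rfl fun k hk => ?_)
  obtain ⟨hk1, hky⟩ := Finset.mem_Icc.mp hk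
  rw [mul_div_assoc, hS.div_eq_card_rankLevel hrk hk1 hky]
end
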